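/- Let W_n be the squared cycle graph on vertex set ZMod n (edges between i and i+1, and between i and i+2). For n ≥ 10 (more generally n ≥ 3k+1 with k = 3), every subset A of vertices with |A| = 7 contains an independent set of size 3 in W_n. -/

import Mathlib

/-- The squared cycle graph `W n` on `ZMod n`: edges between `i, i+1` and `i, i+2`. -/
def squaredCycle (n : ℕ) : SimpleGraph (ZMod n) where
  Adj a b := a ≠ b ∧ (b = a + 1 ∨ a = b + 1 ∨ b = a + 2 ∨ a = b + 2)
  symm := by constructor; rintro a b ⟨hne, h⟩; exact ⟨hne.symm, by tauto⟩
  loopless := by constructor; rintro a ⟨hne, -⟩; exact hne rfl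

/-- `S` is an independent set in the squared cycle graph on `ZMod n`. -/
def IsIndepSet (n : ℕ) (S : Finset (ZMod n)) : Prop :=
  ∀ a ∈ S, ∀ b ∈ S, ¬ (squaredCycle n).Adj a b

/-- `σ` is a face of the `k`-total cut complex of `squaredCycle n`:
its complement contains an independent set of size `k`. -/
def IsFace (n k : ℕ) (σ : Finset (ZMod n)) : Prop :=
  ∃ S : Finset (ZMod n), Disjoint S σ ∧ S.card = k ∧ IsIndepSet n S


def parc (g : ℕ → ℕ) : ℕ → ℕ
  | 0 => 0
  | j+1 => parc g j + g j

def gb (f : Fin 7 → Bool) (t : ℕ) : ℕ := cond (f ⟨t % 7, Nat.mod_lt _ (by norm_num)⟩) 2 1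

set_option maxRecDepth 10000 in
lemma Ldec2 : ∀ f : Fin 7 → Bool, 10 ≤ parc (gb f) 7 →
    ∃ i j k : Fin 7, (i : ℕ) < (j : ℕ) ∧ (j : ℕ) < (k : ℕ) ∧
      parc (gb f) i + 3 ≤ parc (gb f) j ∧
      parc (gb f) j + 3 ≤ parc (gb f) k ∧
      parc (gb f) k + 3 ≤ parc (gb f) i + parc (gb f) 7 := by decide

lemma parc_congr (g h : ℕ → ℕ) (H : ∀ t, t < 7 → h t = g t) :
    ∀ j, j ≤ 7 → parc h j = parc g j := by
  intro j
  induction j with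
  | zero => intro _; rfl
  | succ m ih =>
    intro hm
    have := H m (by omega)
    have := ih (by omega)
    show parc h m + h m = parc g m + g m
    omega

lemma Lgen (g : ℕ → ℕ) (h1 : ∀ t, t < 7 → 1 ≤ g t) (hsum : 10 ≤ parc g 7) :
    ∃ i j k, i < j ∧ j < k ∧ k ≤ 6 ∧
      parc g i + 3 ≤ parc g j ∧ parc g j + 3 ≤ parc g k ∧
      parc g k + 3 ≤ parc g i + parc g 7 := by
  have q1 : parc g 1 = parc g 0 + g 0 := rfl
  have q2 : parc g 2 = parc g 1 + g 1 := rfl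
  have q3 : parc g 3 = parc g 2 + g 2 := rfl
  have q4 : parc g 4 = parc g 3 + g 3 := rfl
  have q5 : parc g 5 = parc g 4 + g 4 := rfl
  have q6 : parc g 6 = parc g 5 + g 5 := rfl
  have q7 : parc g 7 = parc g 6 + g 6 := rfl
  have q0 : parc g 0 = 0 := rfl
  have a0 := h1 0 (by omega); have a1 := h1 1 (by omega); have a2 := h1 2 (by omega)
  have a3 := h1 3 (by omega); have a4 := h1 4 (by omega); have a5 := h1 5 (by omega)
  have a6 := h1 6 (by omega)
  by_cases hbig : ∃ t, t < 7 ∧ 3 ≤ g t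
  · obtain ⟨t, ht7, ht⟩ := hbig
    interval_cases t
    · exact ⟨0, 1, 4, by omega, by omega, by omega, by omega, by omega, by omega⟩
    · exact ⟨1, 2, 5, by omega, by omega, by omega, by omega, by omega, by omega⟩
    · exact ⟨2, 3, 6, by omega, by omega, by omega, by omega, by omega, by omega⟩
    · exact ⟨0, 3, 4, by omega, by omega, by omega, by omega, by omega, by omega⟩
    · exact ⟨1, 4, 5, by omega, by omega, by omega, by omega, by omega, by omega⟩
    · exact ⟨2, 5, 6, by omega, by omega, by omega, by omega, by omega, by omega⟩
    · exact ⟨0, 3, 6, by omega, by omega, by omega, by omega, by omega, by omega⟩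
  · push_neg at hbig
    set f : Fin 7 → Bool := fun t => decide (g t = 2) with hf
    have heq : ∀ t, t < 7 → gb f t = g t := by
      intro t ht
      have h7 : t % 7 = t := Nat.mod_eq_of_lt ht
      have := h1 t ht
      have := hbig t ht
      simp only [gb, hf, h7]
      by_cases h2 : g t = 2
      · simp [h2]
      · have : g t = 1 := by omega
        simp [this]
    have hpeq : ∀ j, j ≤ 7 → parc (gb f) j = parc g j := parc_congr g (gb f) heq
    obtain ⟨i, j, k, hij, hjk, c1, c2, c3⟩ := Ldec2 f (by rw [hpeq 7 le_rfl]; exact hsum)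
    refine ⟨i, j, k, hij, hjk, by omega, ?_, ?_, ?_⟩
    · rw [← hpeq i (by omega), ← hpeq j (by omega)]; exact c1
    · rw [← hpeq j (by omega), ← hpeq k (by omega)]; exact c2
    · rw [← hpeq k (by omega), ← hpeq i (by omega), ← hpeq 7 le_rfl]; exact c3

lemma exists_triple (n : ℕ) (hn : 10 ≤ n) (v : ℕ → ℕ)
    (hmono : ∀ t, t < 6 → v t < v (t + 1)) (hlt : v 6 < n) :
    ∃ i j k, i < j ∧ j < k ∧ k ≤ 6 ∧ v i + 3 ≤ v j ∧ v j + 3 ≤ v k ∧ v k + 3 ≤ v i + n := by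
  set g : ℕ → ℕ := fun t => if t < 6 then v (t + 1) - v t else (n - v 6) + v 0 with hg
  have hg1 : ∀ t, t < 7 → 1 ≤ g t := by
    intro t ht
    by_cases h : t < 6
    · have := hmono t h; simp only [hg, if_pos h]; omega
    · simp only [hg, if_neg h]; omega
  have key : ∀ j, j ≤ 6 → v 0 + parc g j = v j := by
    intro j
    induction j with
    | zero => intro _; simp [parc]
    | succ m ih =>
      intro hm
      have h1 := ih (by omega)
      have h2 := hmono m (by omega)
      show v 0 + (parc g m + g m) = v (m + 1)
      have : g m = v (m + 1) - v m := by simp only [hg, if_pos (show m < 6 by omega)]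
      omega
  have key7 : v 0 + parc g 7 = n + v 0 := by
    have h6 := key 6 (by omega)
    show v 0 + (parc g 6 + g 6) = n + v 0
    have : g 6 = (n - v 6) + v 0 := by norm_num [hg]
    omega
  obtain ⟨i, j, k, hij, hjk, hk6, c1, c2, c3⟩ := Lgen g hg1 (by omega)
  have ki := key i (by omega); have kj := key j (by omega); have kk := key k (by omega)
  exact ⟨i, j, k, hij, hjk, hk6, by omega, by omega, by omega⟩

lemma pairSafe (n p q : ℕ) (hn : 10 ≤ n) (hq : q < n) (h1 : p + 3 ≤ q) (h2 : q + 3 ≤ p + n) :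
    ¬ (squaredCycle n).Adj (p : ZMod n) (q : ZMod n) := by
  rintro ⟨-, h | h | h | h⟩
  · have h' : ((q : ℕ) : ZMod n) = ((p + 1 : ℕ) : ZMod n) := by push_cast; exact h
    rw [ZMod.natCast_eq_natCast_iff] at h'
    have hd := (Nat.modEq_iff_dvd' (show p + 1 ≤ q by omega)).mp h'.symm
    have := Nat.le_of_dvd (by omega) hd
    omega
  · have h' : ((p : ℕ) : ZMod n) = ((q + 1 : ℕ) : ZMod n) := by push_cast; exact h
    rw [ZMod.natCast_eq_natCast_iff] at h'
    have hd := (Nat.modEq_iff_dvd' (show p ≤ q + 1 by omega)).mp h'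
    have := Nat.le_of_dvd (by omega) hd
    omega
  · have h' : ((q : ℕ) : ZMod n) = ((p + 2 : ℕ) : ZMod n) := by push_cast; exact h
    rw [ZMod.natCast_eq_natCast_iff] at h'
    have hd := (Nat.modEq_iff_dvd' (show p + 2 ≤ q by omega)).mp h'.symm
    have := Nat.le_of_dvd (by omega) hd
    omega
  · have h' : ((p : ℕ) : ZMod n) = ((q + 2 : ℕ) : ZMod n) := by push_cast; exact h
    rw [ZMod.natCast_eq_natCast_iff] at h'
    have hd := (Nat.modEq_iff_dvd' (show p ≤ q + 2 by omega)).mp h'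
    have := Nat.le_of_dvd (by omega) hd
    omega

theorem stmt0 (n : ℕ) (hn : 10 ≤ n) (A : Finset (ZMod n)) (hA : A.card = 7) :
    ∃ S ⊆ A, S.card = 3 ∧ IsIndepSet n S := by
  haveI : NeZero n := ⟨by omega⟩
  have hBcard : (A.image ZMod.val).card = 7 := by
    rw [Finset.card_image_of_injective _ (ZMod.val_injective n), hA]
  set e := (A.image ZMod.val).orderEmbOfFin hBcard with he
  have hmemB : ∀ i : Fin 7, e i ∈ A.image ZMod.val := fun i =>
    (A.image ZMod.val).orderEmbOfFin_mem hBcard i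
  set V : ℕ → ℕ := fun t => e ⟨min t 6, by omega⟩ with hV
  have hVlt : ∀ t, V t < n := by
    intro t
    obtain ⟨a, -, ha⟩ := Finset.mem_image.mp (hmemB ⟨min t 6, by omega⟩)
    simp only [hV]
    rw [← ha]
    exact ZMod.val_lt a
  have hmono : ∀ t, t < 6 → V t < V (t + 1) := by
    intro t ht
    apply e.strictMono
    simp only [Fin.lt_def]
    omega
  obtain ⟨i, j, k, hij, hjk, hk6, d1, d2, d3⟩ := exists_triple n hn V hmono (hVlt 6)
  have hmem : ∀ t, ((V t : ℕ) : ZMod n) ∈ A ∧ ((V t : ℕ) : ZMod n).val = V t := by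
    intro t
    obtain ⟨a, haA, ha⟩ := Finset.mem_image.mp (hmemB ⟨min t 6, by omega⟩)
    have hcast : ((V t : ℕ) : ZMod n) = a := by
      simp only [hV]; rw [← ha]; exact ZMod.natCast_rightInverse a
    exact ⟨hcast ▸ haA, by rw [ZMod.val_cast_of_lt (hVlt t)]⟩
  set x : ZMod n := ((V i : ℕ) : ZMod n) with hx
  set y : ZMod n := ((V j : ℕ) : ZMod n) with hy
  set z : ZMod n := ((V k : ℕ) : ZMod n) with hz
  have hxy : x ≠ y := by
    intro h
    have := congrArg ZMod.val h
    rw [(hmem i).2, (hmem j).2] at this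
    omega
  have hyz : y ≠ z := by
    intro h
    have := congrArg ZMod.val h
    rw [(hmem j).2, (hmem k).2] at this
    omega
  have hxz : x ≠ z := by
    intro h
    have := congrArg ZMod.val h
    rw [(hmem i).2, (hmem k).2] at this
    omega
  have axy : ¬ (squaredCycle n).Adj x y := pairSafe n (V i) (V j) hn (hVlt j) d1 (by omega)
  have ayz : ¬ (squaredCycle n).Adj y z := pairSafe n (V j) (V k) hn (hVlt k) d2 (by omega)
  have axz : ¬ (squaredCycle n).Adj x z := pairSafe n (V i) (V k) hn (hVlt k) (by omega) d3
  refine ⟨{x, y, z}, ?_, ?_, ?_⟩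
  · intro a ha
    simp only [Finset.mem_insert, Finset.mem_singleton] at ha
    rcases ha with rfl | rfl | rfl
    exacts [(hmem i).1, (hmem j).1, (hmem k).1]
  · rw [Finset.card_insert_of_notMem (by simp [hxy, hxz]),
      Finset.card_insert_of_notMem (by simp [hyz]), Finset.card_singleton]
  · intro a ha b hb
    simp only [Finset.mem_insert, Finset.mem_singleton] at ha hb
    rcases ha with rfl | rfl | rfl <;> rcases hb with rfl | rfl | rfl
    exacts [(squaredCycle n).loopless.irrefl x, axy, axz,
      fun h => axy h.symm, (squaredCycle n).loopless.irrefl y, ayz,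
      fun h => axz h.symm, fun h => ayz h.symm, (squaredCycle n).loopless.irrefl z]
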